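/- CBN bisimulation: if M ⇓ⁿ V in CBN PCF and M ↦ M' under the CBN-to-CBPV translation relation, then M' ⇓ⁿ T' in CBPV for some terminal computation T' with V ↦ T'; conversely, if M' ⇓ⁿ T' in CBPV and M ↦ M', then M ⇓ⁿ V in CBN PCF for some V with V ↦ T'. In particular evaluation costs are preserved and reflected exactly. -/

import Mathlib

set_option linter.unusedVariables false

/-- The arithmetic operations of PCF / CBPV. -/
inductive Op | add | mul | sub | div | mod
deriving DecidableEq

def Op.den : Op → ℕ → ℕ → ℕ
  | .add, a, b => a + b
  | .mul, a, b => a * b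
  | .sub, a, b => a - b
  | .div, a, b => a / b
  | .mod, a, b => a % b
namespace PCF

/-- Raw terms of call-by-name PCF in de Bruijn representation;
`proj true` is the first projection. -/
inductive Tm
  | var : ℕ → Tm
  | num : ℕ → Tm
  | op : Op → Tm → Tm → Tm
  | ifz : Tm → Tm → Tm → Tm
  | pair : Tm → Tm → Tm
  | proj : Bool → Tm → Tm
  | lam : Tm → Tm
  | app : Tm → Tm → Tm
  | fix : Tm → Tm
deriving DecidableEq

/-- Shift (by one) the de Bruijn variables `≥ c`. -/
def shift (c : ℕ) : Tm → Tm
  | .var n => if n < c then .var n else .var (n + 1)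
  | .num n => .num n
  | .op o M N => .op o (shift c M) (shift c N)
  | .ifz M P Q => .ifz (shift c M) (shift c P) (shift c Q)
  | .pair M N => .pair (shift c M) (shift c N)
  | .proj b M => .proj b (shift c M)
  | .lam M => .lam (shift (c + 1) M)
  | .app M N => .app (shift c M) (shift c N)
  | .fix M => .fix (shift (c + 1) M)

/-- Capture-avoiding substitution of `s` for the de Bruijn variable `k`. -/
def subst (s : Tm) : ℕ → Tm → Tm
  | k, .var n => if n = k then (shift 0)^[k] s else if k < n then .var (n - 1) else .var n
  | k, .num n => .num n
  | k, .op o M N => .op o (subst s k M) (subst s k N)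
  | k, .ifz M P Q => .ifz (subst s k M) (subst s k P) (subst s k Q)
  | k, .pair M N => .pair (subst s k M) (subst s k N)
  | k, .proj b M => .proj b (subst s k M)
  | k, .lam M => .lam (subst s (k + 1) M)
  | k, .app M N => .app (subst s k M) (subst s k N)
  | k, .fix M => .fix (subst s (k + 1) M)

/-- The cost-annotated call-by-name big-step semantics `M ⇓ⁿ V`:
pair projections and function applications cost one unit. -/
inductive Eval : Tm → ℕ → Tm → Prop
  | num {n} : Eval (.num n) 0 (.num n)
  | op {o M N m n a b} : Eval M m (.num a) → Eval N n (.num b) →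
      Eval (.op o M N) (m + n) (.num (o.den a b))
  | ifz_zero {M P Q m p V} : Eval M m (.num 0) → Eval P p V →
      Eval (.ifz M P Q) (m + p) V
  | ifz_succ {M P Q m q k V} : Eval M m (.num (k + 1)) → Eval Q q V →
      Eval (.ifz M P Q) (m + q) V
  | pair {M N} : Eval (.pair M N) 0 (.pair M N)
  | proj {M M₁ M₂ m k V b} : Eval M m (.pair M₁ M₂) → Eval (cond b M₁ M₂) k V →
      Eval (.proj b M) (m + k + 1) V
  | lam {M} : Eval (.lam M) 0 (.lam M)
  | app {M N B m k V} : Eval M m (.lam B) → Eval (subst N 0 B) k V →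
      Eval (.app M N) (m + k + 1) V
  | fix {M k V} : Eval (subst (.fix M) 0 M) k V → Eval (.fix M) k V

end PCF
namespace CBPV

/-- Raw terms of Call-by-Push-Value (values and computations merged), in de
Bruijn representation.  `pairV` is the positive (value) pair, `cpair` the
negative (computation) pair, `calc'` the arithmetic construct
`calc v op w as x in N`, and `charge` the unit-cost effect. -/
inductive CTm
  | var : ℕ → CTm
  | num : ℕ → CTm
  | pairV : CTm → CTm → CTm
  | thunk : CTm → CTm
  | ret : CTm → CTm
  | lam : CTm → CTm                 -- binds 1
  | app : CTm → CTm → CTm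
  | cpair : CTm → CTm → CTm
  | proj : Bool → CTm → CTm
  | split : CTm → CTm → CTm         -- second argument binds 2
  | bind : CTm → CTm → CTm          -- second argument binds 1
  | ifz : CTm → CTm → CTm → CTm
  | calc' : Op → CTm → CTm → CTm → CTm  -- last argument binds 1
  | charge : CTm → CTm
  | force : CTm → CTm
  | cfix : CTm → CTm                -- binds 1 (a thunk variable)
deriving DecidableEq

/-- Shift (by one) the de Bruijn variables `≥ c`. -/
def cshift (c : ℕ) : CTm → CTm
  | .var n => if n < c then .var n else .var (n + 1)
  | .num n => .num n
  | .pairV V W => .pairV (cshift c V) (cshift c W)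
  | .thunk M => .thunk (cshift c M)
  | .ret V => .ret (cshift c V)
  | .lam M => .lam (cshift (c + 1) M)
  | .app M V => .app (cshift c M) (cshift c V)
  | .cpair M N => .cpair (cshift c M) (cshift c N)
  | .proj b M => .proj b (cshift c M)
  | .split V N => .split (cshift c V) (cshift (c + 2) N)
  | .bind M N => .bind (cshift c M) (cshift (c + 1) N)
  | .ifz V M N => .ifz (cshift c V) (cshift c M) (cshift c N)
  | .calc' o V W K => .calc' o (cshift c V) (cshift c W) (cshift (c + 1) K)
  | .charge M => .charge (cshift c M)
  | .force V => .force (cshift c V)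
  | .cfix M => .cfix (cshift (c + 1) M)

/-- Capture-avoiding substitution of `s` for the de Bruijn variable `k`. -/
def csubst (s : CTm) : ℕ → CTm → CTm
  | k, .var n => if n = k then (cshift 0)^[k] s else if k < n then .var (n - 1) else .var n
  | k, .num n => .num n
  | k, .pairV V W => .pairV (csubst s k V) (csubst s k W)
  | k, .thunk M => .thunk (csubst s k M)
  | k, .ret V => .ret (csubst s k V)
  | k, .lam M => .lam (csubst s (k + 1) M)
  | k, .app M V => .app (csubst s k M) (csubst s k V)
  | k, .cpair M N => .cpair (csubst s k M) (csubst s k N)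
  | k, .proj b M => .proj b (csubst s k M)
  | k, .split V N => .split (csubst s k V) (csubst s (k + 2) N)
  | k, .bind M N => .bind (csubst s k M) (csubst s (k + 1) N)
  | k, .ifz V M N => .ifz (csubst s k V) (csubst s k M) (csubst s k N)
  | k, .calc' o V W K => .calc' o (csubst s k V) (csubst s k W) (csubst s (k + 1) K)
  | k, .charge M => .charge (csubst s k M)
  | k, .force V => .force (csubst s k V)
  | k, .cfix M => .cfix (csubst s (k + 1) M)

/-- The cost-annotated big-step semantics `M ⇓ⁿ T` of CBPV: cost is incurred
only by the `charge` effect.  Terminal computations are `ret V`,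
λ-abstractions, and negative pairs. -/
inductive CEval : CTm → ℕ → CTm → Prop
  | ret {V} : CEval (.ret V) 0 (.ret V)
  | lam {M} : CEval (.lam M) 0 (.lam M)
  | cpair {M N} : CEval (.cpair M N) 0 (.cpair M N)
  | force {M n T} : CEval M n T → CEval (.force (.thunk M)) n T
  | bind {M N V m n T} : CEval M m (.ret V) → CEval (csubst V 0 N) n T →
      CEval (.bind M N) (m + n) T
  | app {M B V m n T} : CEval M m (.lam B) → CEval (csubst V 0 B) n T →
      CEval (.app M V) (m + n) T
  | proj {M M₁ M₂ b m n T} : CEval M m (.cpair M₁ M₂) → CEval (cond b M₁ M₂) n T →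
      CEval (.proj b M) (m + n) T
  | split {V W N n T} : CEval (csubst W 0 (csubst V 1 N)) n T →
      CEval (.split (.pairV V W) N) n T
  | ifz_zero {M N n T} : CEval M n T → CEval (.ifz (.num 0) M N) n T
  | ifz_succ {M N k n T} : CEval N n T → CEval (.ifz (.num (k + 1)) M N) n T
  | calc' {o a b K n T} : CEval (csubst (.num (o.den a b)) 0 K) n T →
      CEval (.calc' o (.num a) (.num b) K) n T
  | charge {M n T} : CEval M n T → CEval (.charge M) (n + 1) T
  | cfix {M n T} : CEval (csubst (.thunk (.cfix M)) 0 M) n T → CEval (.cfix M) n T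

end CBPV
open CBPV in
/-- The CBN-PCF-to-CBPV translation relation `M ↦ M'`, defined inductively
with one rule per clause of the compositional translation (inserting
`charge` exactly where CBN PCF incurs a unit cost, i.e. at projections and
applications), plus the rule allowing `M ↦ force (thunk M')`. -/
inductive CbnRel : PCF.Tm → CBPV.CTm → Prop
  | var {n} : CbnRel (.var n) (.force (.var n))
  | num {n} : CbnRel (.num n) (.ret (.num n))
  | op {o M N M' N'} : CbnRel M M' → CbnRel N N' →
      CbnRel (.op o M N)
        (.bind M' (.bind (cshift 0 N') (.calc' o (.var 1) (.var 0) (.ret (.var 0)))))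
  | ifz {M P Q M' P' Q'} : CbnRel M M' → CbnRel P P' → CbnRel Q Q' →
      CbnRel (.ifz M P Q) (.bind M' (.ifz (.var 0) (cshift 0 P') (cshift 0 Q')))
  | pair {M N M' N'} : CbnRel M M' → CbnRel N N' →
      CbnRel (.pair M N) (.cpair M' N')
  | proj {b M M'} : CbnRel M M' → CbnRel (.proj b M) (.charge (.proj b M'))
  | lam {M M'} : CbnRel M M' → CbnRel (.lam M) (.lam M')
  | app {M N M' N'} : CbnRel M M' → CbnRel N N' →
      CbnRel (.app M N) (.charge (.app M' (.thunk N')))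
  | fix {M M'} : CbnRel M M' → CbnRel (.fix M) (.cfix M')
  | force_thunk {M M'} : CbnRel M M' → CbnRel M (.force (.thunk M'))

/-!
Both directions go by recursion on the given derivation, matching it against the translation.
The key fact is the substitution lemma `CbnRel.subst`: substituting `N` for a variable commutes
with the translation, the translated variable `force (var k)` becoming `force (thunk N')`, which
is exactly what the `force_thunk` rule admits. Costs agree because `charge` sits precisely at
projections and applications, the only PCF rules that cost anything.
-/

namespace CBPV

theorem cshift_cshift (t : CTm) (i j : ℕ) (h : i ≤ j) :
    cshift i (cshift j t) = cshift (j + 1) (cshift i t) := by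
  induction t generalizing i j with
  | var n =>
    simp only [cshift]
    split_ifs <;> simp only [cshift] <;> split_ifs <;> first | rfl | omega
  | _ => simp only [cshift, *, Nat.add_le_add_right h]

theorem cshift_iterate_of_le (s : CTm) {k i : ℕ} (hi : i ≤ k) :
    cshift i ((cshift 0)^[k] s) = (cshift 0)^[k + 1] s := by
  induction k generalizing i with
  | zero => obtain rfl := Nat.le_zero.mp hi; rw [Function.iterate_succ_apply']
  | succ k ih =>
    rw [Function.iterate_succ_apply' _ (k + 1)]
    rcases i with _ | j
    · rfl
    · rw [Function.iterate_succ_apply', ← cshift_cshift _ 0 j (Nat.zero_le j), ih (by omega),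
        Function.iterate_succ_apply']

theorem csubst_cshift_of_le (s t : CTm) {i k : ℕ} (h : i ≤ k) :
    csubst s (k + 1) (cshift i t) = cshift i (csubst s k t) := by
  induction t generalizing i k with
  | var n =>
    simp only [cshift, csubst]
    split_ifs <;> simp only [csubst, cshift] <;> split_ifs <;>
      first | rfl | omega | exact (cshift_iterate_of_le s (by omega)).symm | (congr 1; omega)
  | _ => simp only [cshift, csubst, *, Nat.add_le_add_right h]

theorem csubst_cshift (s t : CTm) (k : ℕ) : csubst s k (cshift k t) = t := by
  induction t generalizing k with
  | var n =>
    simp only [cshift]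
    split_ifs <;> simp only [csubst] <;> split_ifs <;> first | rfl | omega
  | _ => simp only [cshift, csubst, *]

theorem iterate_cshift_thunk (M : CTm) (k : ℕ) :
    (cshift 0)^[k] (.thunk M) = .thunk ((cshift 0)^[k] M) := by
  induction k with
  | zero => rfl
  | succ k ih => simp only [Function.iterate_succ_apply', ih, cshift]

def Terminal : CTm → Prop
  | .ret _ | .lam _ | .cpair _ _ => True
  | _ => False

theorem CEval.terminal {M n T} (h : CEval M n T) : Terminal T := by
  induction h <;> trivial

theorem CEval.bind_bind_calc {M N o m k a b} (hM : CEval M m (.ret (.num a)))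
    (hN : CEval N k (.ret (.num b))) :
    CEval (.bind M (.bind (cshift 0 N) (.calc' o (.var 1) (.var 0) (.ret (.var 0)))))
      (m + k) (.ret (.num (o.den a b))) := by
  refine .bind hM ?_
  have hcalc : CEval (.bind N (.calc' o (.num a) (.var 0) (.ret (.var 0)))) (k + 0)
      (.ret (.num (o.den a b))) := hN.bind (.calc' .ret)
  simpa [csubst, cshift, csubst_cshift] using hcalc

end CBPV

open CBPV

namespace CbnRel

theorem shift {M M'} (h : CbnRel M M') (c : ℕ) : CbnRel (PCF.shift c M) (cshift c M') := by
  induction h generalizing c with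
  | @var n =>
    by_cases h : n < c <;> simp only [PCF.shift, cshift, h, if_true, if_false] <;> exact .var
  | op _ _ ihM ihN =>
    simp only [PCF.shift, cshift, ← cshift_cshift _ 0 c (Nat.zero_le c)]
    exact .op (ihM c) (ihN c)
  | ifz _ _ _ ihM ihP ihQ =>
    simp only [PCF.shift, cshift, ← cshift_cshift _ 0 c (Nat.zero_le c)]
    exact .ifz (ihM c) (ihP c) (ihQ c)
  | _ => constructor <;> apply_assumption

theorem iterate_shift {M M'} (h : CbnRel M M') (k : ℕ) :
    CbnRel ((PCF.shift 0)^[k] M) ((cshift 0)^[k] M') := by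
  induction k with
  | zero => exact h
  | succ k ih => simpa only [Function.iterate_succ_apply'] using ih.shift 0

theorem subst {N N'} (hN : CbnRel N N') {M M'} (h : CbnRel M M') (k : ℕ) :
    CbnRel (PCF.subst N k M) (csubst (.thunk N') k M') := by
  induction h generalizing k with
  | @var n =>
    simp only [PCF.subst, csubst]
    split_ifs
    · rw [iterate_cshift_thunk]; exact .force_thunk (hN.iterate_shift _)
    all_goals exact .var
  | op _ _ ihM ihN =>
    simp only [PCF.subst, csubst, csubst_cshift_of_le _ _ (Nat.zero_le k)]
    exact .op (ihM k) (ihN k)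
  | ifz _ _ _ ihM ihP ihQ =>
    simp only [PCF.subst, csubst, csubst_cshift_of_le _ _ (Nat.zero_le k)]
    exact .ifz (ihM k) (ihP k) (ihQ k)
  | _ => constructor <;> apply_assumption

theorem cond {P Q A B} (hP : CbnRel P A) (hQ : CbnRel Q B) (b : Bool) :
    CbnRel (cond b P Q) (cond b A B) := by
  cases b <;> assumption

theorem left_of_ret {W U} (h : CbnRel W (.ret U)) : ∃ a, W = .num a ∧ U = .num a := by
  cases h; exact ⟨_, rfl, rfl⟩

theorem left_of_lam {W B'} (h : CbnRel W (.lam B')) : ∃ B, W = .lam B ∧ CbnRel B B' := by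
  cases h; exact ⟨_, rfl, ‹_›⟩

theorem left_of_cpair {W A B} (h : CbnRel W (.cpair A B)) :
    ∃ P Q, W = .pair P Q ∧ CbnRel P A ∧ CbnRel Q B := by
  cases h; exact ⟨_, _, rfl, ‹_›, ‹_›⟩

theorem right_of_num {a T} (h : CbnRel (.num a) T) (hT : Terminal T) : T = .ret (.num a) := by
  cases h with
  | num => rfl
  | force_thunk => exact hT.elim

theorem right_of_lam {B T} (h : CbnRel (.lam B) T) (hT : Terminal T) :
    ∃ B', T = .lam B' ∧ CbnRel B B' := by
  cases h with
  | lam h => exact ⟨_, rfl, h⟩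
  | force_thunk => exact hT.elim

theorem right_of_pair {P Q T} (h : CbnRel (.pair P Q) T) (hT : Terminal T) :
    ∃ A B, T = .cpair A B ∧ CbnRel P A ∧ CbnRel Q B := by
  cases h with
  | pair hP hQ => exact ⟨_, _, rfl, hP, hQ⟩
  | force_thunk => exact hT.elim

theorem induction_on_head {M : PCF.Tm} {P : CTm → Prop}
    (force_thunk : ∀ {M'}, P M' → P (.force (.thunk M')))
    (head : ∀ {M'}, CbnRel M M' → (∀ M'', M' ≠ .force (.thunk M'')) → P M')
    {M'} (h : CbnRel M M') : P M' := by
  induction h with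
  | force_thunk _ ih => exact force_thunk (ih head)
  | _ => exact head (by constructor <;> assumption) (by simp)

theorem preserve : ∀ {M n V}, PCF.Eval M n V → ∀ {M'}, CbnRel M M' →
    ∃ T', CEval M' n T' ∧ CbnRel V T'
  | _, n, V, he, _, h =>
    h.induction_on_head (P := fun M' => ∃ T', CEval M' n T' ∧ CbnRel V T')
      (fun ⟨T, hT, hTrel⟩ => ⟨T, .force hT, hTrel⟩) fun hrel hhead => by
    match he, hrel with
    | .num, .num => exact ⟨_, .ret, .num⟩
    | .lam, .lam hM => exact ⟨_, .lam, .lam hM⟩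
    | .pair, .pair hM hN => exact ⟨_, .cpair, .pair hM hN⟩
    | .fix he, .fix hM =>
      obtain ⟨T, hT, hTrel⟩ := preserve he ((CbnRel.fix hM).subst hM 0)
      exact ⟨T, .cfix hT, hTrel⟩
    | .app hm hk, .app hM hN =>
      obtain ⟨T₁, hT₁, hT₁rel⟩ := preserve hm hM
      obtain ⟨B', rfl, hB⟩ := hT₁rel.right_of_lam hT₁.terminal
      obtain ⟨T, hT, hTrel⟩ := preserve hk (hN.subst hB 0)
      exact ⟨T, .charge (.app hT₁ hT), hTrel⟩
    | .proj hm hk, .proj hM =>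
      obtain ⟨T₁, hT₁, hT₁rel⟩ := preserve hm hM
      obtain ⟨A, B, rfl, hA, hB⟩ := hT₁rel.right_of_pair hT₁.terminal
      obtain ⟨T, hT, hTrel⟩ := preserve hk (hA.cond hB _)
      exact ⟨T, .charge (.proj hT₁ hT), hTrel⟩
    | .ifz_zero hm hp, .ifz hM hP _ =>
      obtain ⟨T₁, hT₁, hT₁rel⟩ := preserve hm hM
      obtain ⟨T, hT, hTrel⟩ := preserve hp hP
      rw [hT₁rel.right_of_num hT₁.terminal] at hT₁
      refine ⟨T, .bind hT₁ ?_, hTrel⟩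
      simpa [csubst, csubst_cshift] using CEval.ifz_zero hT
    | .ifz_succ hm hq, .ifz hM _ hQ =>
      obtain ⟨T₁, hT₁, hT₁rel⟩ := preserve hm hM
      obtain ⟨T, hT, hTrel⟩ := preserve hq hQ
      rw [hT₁rel.right_of_num hT₁.terminal] at hT₁
      refine ⟨T, .bind hT₁ ?_, hTrel⟩
      simpa [csubst, csubst_cshift] using CEval.ifz_succ hT
    | .op hm hn, .op hM hN =>
      obtain ⟨T₁, hT₁, hT₁rel⟩ := preserve hm hM
      obtain ⟨T₂, hT₂, hT₂rel⟩ := preserve hn hN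
      rw [hT₁rel.right_of_num hT₁.terminal] at hT₁
      rw [hT₂rel.right_of_num hT₂.terminal] at hT₂
      exact ⟨_, hT₁.bind_bind_calc hT₂, .num⟩
    | _, .force_thunk _ => exact absurd rfl (hhead _)
termination_by structural _ _ _ he => he

/-- Structural recursion rather than `induction`: the `op` and `ifz` cases recurse into premises
of premises, past the administrative `bind`s of the translation. -/
theorem reflect : ∀ {M M'}, CbnRel M M' → ∀ {n T'}, CEval M' n T' →
    ∃ V, PCF.Eval M n V ∧ CbnRel V T'
  | _, _, .num, _, _, .ret => ⟨_, .num, .num⟩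
  | _, _, .lam hM, _, _, .lam => ⟨_, .lam, .lam hM⟩
  | _, _, .pair hM hN, _, _, .cpair => ⟨_, .pair, .pair hM hN⟩
  | _, _, .force_thunk hM, _, _, .force hc => reflect hM hc
  | _, _, .fix hM, _, _, .cfix hc =>
    let ⟨V, hV, hVrel⟩ := reflect ((CbnRel.fix hM).subst hM 0) hc
    ⟨V, .fix hV, hVrel⟩
  | _, _, .app hM hN, _, _, .charge (.app hc₁ hc₂) => by
    obtain ⟨W, hW, hWrel⟩ := reflect hM hc₁
    obtain ⟨B, rfl, hB⟩ := hWrel.left_of_lam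
    obtain ⟨V, hV, hVrel⟩ := reflect (hN.subst hB 0) hc₂
    exact ⟨V, .app hW hV, hVrel⟩
  | _, _, .proj hM, _, _, .charge (.proj hc₁ hc₂) => by
    obtain ⟨W, hW, hWrel⟩ := reflect hM hc₁
    obtain ⟨P, Q, rfl, hP, hQ⟩ := hWrel.left_of_cpair
    obtain ⟨V, hV, hVrel⟩ := reflect (hP.cond hQ _) hc₂
    exact ⟨V, .proj hW hV, hVrel⟩
  | _, _, .ifz hM hP _, _, _, .bind hc₁ (.ifz_zero hc₂) => by
    obtain ⟨W, hW, hWrel⟩ := reflect hM hc₁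
    obtain ⟨_, rfl, ⟨⟩⟩ := hWrel.left_of_ret
    obtain ⟨V, hV, hVrel⟩ := reflect (by rwa [csubst_cshift]) hc₂
    exact ⟨V, .ifz_zero hW hV, hVrel⟩
  | _, _, .ifz hM _ hQ, _, _, .bind hc₁ (.ifz_succ hc₂) => by
    obtain ⟨W, hW, hWrel⟩ := reflect hM hc₁
    obtain ⟨_, rfl, ⟨⟩⟩ := hWrel.left_of_ret
    obtain ⟨V, hV, hVrel⟩ := reflect (by rwa [csubst_cshift]) hc₂
    exact ⟨V, .ifz_succ hW hV, hVrel⟩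
  | _, _, .op hM hN, _, _, .bind hc₁ (.bind hc₂ hc₃) => by
    obtain ⟨W, hW, hWrel⟩ := reflect hM hc₁
    obtain ⟨W₂, hW₂, hW₂rel⟩ := reflect (by rwa [csubst_cshift]) hc₂
    obtain ⟨a, rfl, rfl⟩ := hWrel.left_of_ret
    obtain ⟨b, rfl, rfl⟩ := hW₂rel.left_of_ret
    cases hc₃ with | calc' hc₄ =>
    cases hc₄
    exact ⟨_, by simpa using PCF.Eval.op hW hW₂, .num⟩
termination_by structural _ _ _ _ _ hc => hc

end CbnRel

/-- CBN bisimulation.  If `M ⇓ⁿ V` in CBN PCF and `M ↦ M'`,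
then `M' ⇓ⁿ T'` in CBPV for some terminal `T'` with `V ↦ T'`; conversely if
`M' ⇓ⁿ T'` and `M ↦ M'` then `M ⇓ⁿ V` for some `V` with `V ↦ T'`.  In
particular, evaluation costs are preserved and reflected exactly. -/
theorem cbn_bisimulation :
    (∀ (M : PCF.Tm) (n : ℕ) (V : PCF.Tm) (M' : CBPV.CTm),
        PCF.Eval M n V → CbnRel M M' →
        ∃ T', CBPV.CEval M' n T' ∧ CbnRel V T') ∧
    (∀ (M : PCF.Tm) (M' : CBPV.CTm) (n : ℕ) (T' : CBPV.CTm),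
        CBPV.CEval M' n T' → CbnRel M M' →
        ∃ V, PCF.Eval M n V ∧ CbnRel V T') :=
  ⟨fun _ _ _ _ he hrel => hrel.preserve he, fun _ _ _ _ hc hrel => hrel.reflect hc⟩
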